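/- arXiv:1303.6850 — 3 statements merged into one kernel-verified Lean document; each statement's English description precedes it below -/
import Mathlib

section
/- Let X and M be real Hilbert spaces, and let A : X × X → ℝ and B : X × M → ℝ be bounded bilinear forms, with |A(u,v)| ≤ C_A ‖u‖_X ‖v‖_X and |B(u,q)| ≤ C_B ‖u‖_X ‖q‖_M for all u, v ∈ X, q ∈ M. Assume A is coercive with constant α > 0, i.e. A(u,u) ≥ α ‖u‖_X² for all u ∈ X, and B satisfies the inf-sup condition with constant β > 0, i.e. for every q ∈ M, sup_{0 ≠ u ∈ X} B(u,q)/‖u‖_X ≥ β ‖q‖_M. Then for every pair of continuous linear functionals φ ∈ X' and ψ ∈ M', the problem: find u ∈ X and p ∈ M such that A(u,v) + B(v,p) = φ(v) for all v ∈ X and B(u,q) = ψ(q) for all q ∈ M, has a unique solution (u,p); moreover this solution satisfies ‖u‖_X + ‖p‖_M ≤ C (‖φ‖_{X'} + ‖ψ‖_{M'}) for a constant C > 0 depending only on α, β, C_A and C_B. -/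
open RealInnerProductSpace InnerProductSpace ContinuousLinearMap


private lemma saddle_aux1 (α β γ a b s : ℝ) (hα : 0 < α) (hβ : 0 < β) (hγ : 0 < γ)
    (ha : 0 ≤ a) (hb : 0 ≤ b) (h1 : α * a ^ 2 ≤ s) (h2 : β * b ≤ γ * a) :
    α * β ^ 2 / γ ^ 2 * b * b ≤ s := by
  rw [div_mul_eq_mul_div, div_mul_eq_mul_div, div_le_iff₀ (by positivity)]
  have h3 : β * b * (β * b) ≤ γ * a * (γ * a) := mul_self_le_mul_self (by positivity) h2
  have h4 : α * (β * b * (β * b)) ≤ α * (γ * a * (γ * a)) :=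
    mul_le_mul_of_nonneg_left h3 hα.le
  have h5 : γ ^ 2 * (α * a ^ 2) ≤ γ ^ 2 * s := mul_le_mul_of_nonneg_left h1 (by positivity)
  nlinarith [h4, h5]

private lemma saddle_aux3 (K1 K2 K3 : ℝ) (h1 : 0 ≤ K1) (h2 : 0 ≤ K2) (h3 : 0 ≤ K3) :
    0 < K3 * (1 + K2 * (K1 * (K2 * K3 + 1))) + K1 * (K2 * K3 + 1) + 1 := by positivity

private lemma saddle_aux2 (K1 K2 K3 U P F G : ℝ) (hK1 : 0 ≤ K1) (hK2 : 0 ≤ K2) (hK3 : 0 ≤ K3)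
    (hF : 0 ≤ F) (hG : 0 ≤ G) (hP : 0 ≤ P)
    (hp : P ≤ K1 * (K2 * K3 * F + G)) (hu : U ≤ K3 * (F + K2 * P)) :
    U + P ≤ (K3 * (1 + K2 * (K1 * (K2 * K3 + 1))) + K1 * (K2 * K3 + 1) + 1) * (F + G) := by
  have h1 : P ≤ K1 * (K2 * K3 + 1) * (F + G) := by
    nlinarith [mul_nonneg (mul_nonneg (mul_nonneg hK1 hK2) hK3) hG, mul_nonneg hK1 hF]
  have h2 : U ≤ K3 * F + K3 * K2 * (K1 * (K2 * K3 + 1) * (F + G)) := by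
    nlinarith [mul_le_mul_of_nonneg_left h1 (mul_nonneg hK3 hK2)]
  nlinarith [h1, h2, mul_nonneg hK3 hG, add_nonneg hF hG]

set_option maxHeartbeats 1000000


/-- **Abstract saddle point problem (Lemma 2).**
Let `X` and `M` be real Hilbert spaces, `A`, `B` bounded bilinear forms with
`A` coercive (constant `α > 0`) and `B` satisfying the inf-sup condition
(constant `β > 0`). Then for all continuous linear functionals `φ ∈ X'`,
`ψ ∈ M'` the saddle point problem has a unique solution `(u, p)` which
satisfies `‖u‖ + ‖p‖ ≤ C (‖φ‖ + ‖ψ‖)` with `C` depending only on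
`α`, `β`, `C_A`, `C_B`. -/
theorem stmt_0
    (X M : Type*)
    [NormedAddCommGroup X] [InnerProductSpace ℝ X] [CompleteSpace X]
    [NormedAddCommGroup M] [InnerProductSpace ℝ M] [CompleteSpace M]
    (A : X →ₗ[ℝ] X →ₗ[ℝ] ℝ) (B : X →ₗ[ℝ] M →ₗ[ℝ] ℝ)
    (C_A C_B α β : ℝ) (hα : 0 < α) (hβ : 0 < β)
    (hAbdd : ∀ u v : X, |A u v| ≤ C_A * ‖u‖ * ‖v‖)
    (hBbdd : ∀ (u : X) (q : M), |B u q| ≤ C_B * ‖u‖ * ‖q‖)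
    (hAcoer : ∀ u : X, α * ‖u‖ ^ 2 ≤ A u u)
    (hBinfsup : ∀ q : M, β * ‖q‖ ≤ ⨆ u : {u : X // u ≠ 0}, B u.1 q / ‖u.1‖) :
    ∃ C : ℝ, 0 < C ∧
      ∀ (φ : X →L[ℝ] ℝ) (ψ : M →L[ℝ] ℝ),
        (∃! up : X × M,
          (∀ v : X, A up.1 v + B v up.2 = φ v) ∧ (∀ q : M, B up.1 q = ψ q)) ∧
        (∀ up : X × M,
          ((∀ v : X, A up.1 v + B v up.2 = φ v) ∧ (∀ q : M, B up.1 q = ψ q)) →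
            ‖up.1‖ + ‖up.2‖ ≤ C * (‖φ‖ + ‖ψ‖)) := by
  -- bundled continuous bilinear forms
  have hA' : ∀ u v : X, ‖A u v‖ ≤ C_A * ‖u‖ * ‖v‖ := fun u v => by
    simpa [Real.norm_eq_abs] using hAbdd u v
  have hB' : ∀ (u : X) (q : M), ‖B u q‖ ≤ C_B * ‖u‖ * ‖q‖ := fun u q => by
    simpa [Real.norm_eq_abs] using hBbdd u q
  set A' : X →L[ℝ] X →L[ℝ] ℝ := A.mkContinuous₂ C_A hA' with hA'def
  set B' : X →L[ℝ] M →L[ℝ] ℝ := B.mkContinuous₂ C_B hB' with hB'def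
  have hA'app : ∀ u v : X, A' u v = A u v := fun u v => rfl
  have hB'app : ∀ (u : X) (q : M), B' u q = B u q := fun u q => rfl
  -- Lax-Milgram for A
  have coerA : IsCoercive A' := ⟨α, hα, fun u => by
    rw [hA'app]; have := hAcoer u; nlinarith [sq_nonneg ‖u‖]⟩
  set T : X ≃L[ℝ] X := coerA.continuousLinearEquivOfBilin with hTdef
  have hT : ∀ u v : X, ⟪T u, v⟫_ℝ = A u v := fun u v =>
    coerA.continuousLinearEquivOfBilin_apply u v
  -- the operator ℬ : X →L M with ⟪ℬ u, q⟫ = B u q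
  set bLin : X →ₗ[ℝ] M :=
    { toFun := fun u => (toDual ℝ M).symm (B' u)
      map_add' := fun u v => by simp [map_add]
      map_smul' := fun c u => by simp [map_smul] } with hbLindef
  set Bop : X →L[ℝ] M := bLin.mkContinuous ‖B'‖ (fun u => by
    simp only [hbLindef, LinearMap.coe_mk, AddHom.coe_mk, LinearIsometryEquiv.norm_map]
    exact B'.le_opNorm u) with hBopdef
  have hBop : ∀ (u : X) (q : M), ⟪Bop u, q⟫_ℝ = B u q := fun u q => by
    simp only [hBopdef, LinearMap.mkContinuous_apply, hbLindef, LinearMap.coe_mk,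
      AddHom.coe_mk]
    rw [toDual_symm_apply]; exact hB'app u q
  set Bt : M →L[ℝ] X := ContinuousLinearMap.adjoint Bop with hBtdef
  have hBt : ∀ (q : M) (v : X), ⟪Bt q, v⟫_ℝ = B v q := fun q v => by
    rw [hBtdef, ContinuousLinearMap.adjoint_inner_left, real_inner_comm, hBop]
  -- inf-sup gives lower bound on Bt
  have hBtlow : ∀ q : M, β * ‖q‖ ≤ ‖Bt q‖ := by
    intro q
    refine le_trans (hBinfsup q) (Real.iSup_le (fun u => ?_) (norm_nonneg _))
    have hu : (0:ℝ) < ‖u.1‖ := norm_pos_iff.mpr u.2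
    rw [div_le_iff₀ hu, ← hBt q u.1]
    exact real_inner_le_norm _ _
  -- Schur complement operator and bilinear form
  set Sop : M →L[ℝ] M := Bop ∘L ((T.symm : X ≃L[ℝ] X) : X →L[ℝ] X) ∘L Bt with hSopdef
  set SLin : M →ₗ[ℝ] M →ₗ[ℝ] ℝ := LinearMap.mk₂ ℝ (fun q r => ⟪Sop q, r⟫_ℝ)
    (fun q q' r => by simp [inner_add_left])
    (fun c q r => by simp [real_inner_smul_left])
    (fun q r r' => by simp [inner_add_right])
    (fun c q r => by simp [real_inner_smul_right]) with hSLindef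
  set S : M →L[ℝ] M →L[ℝ] ℝ := SLin.mkContinuous₂ ‖Sop‖ (fun q r => by
    simp only [hSLindef, LinearMap.mk₂_apply]
    calc ‖⟪Sop q, r⟫_ℝ‖ ≤ ‖Sop q‖ * ‖r‖ := norm_inner_le_norm _ _
      _ ≤ ‖Sop‖ * ‖q‖ * ‖r‖ := by
          gcongr; exact Sop.le_opNorm q) with hSdef
  have hS : ∀ q r : M, S q r = ⟪Sop q, r⟫_ℝ := fun q r => rfl
  -- coercivity of S
  set γ : ℝ := max ‖(T : X →L[ℝ] X)‖ 1 with hγdef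
  have hγ1 : (1:ℝ) ≤ γ := le_max_right _ _
  have hγ0 : (0:ℝ) < γ := lt_of_lt_of_le one_pos hγ1
  have coerS : IsCoercive S := by
    refine ⟨α * β ^ 2 / γ ^ 2, by positivity, fun q => ?_⟩
    set w : X := T.symm (Bt q) with hwdef
    have hSw : Sop q = Bop w := rfl
    have hTw : T w = Bt q := T.apply_symm_apply _
    have hSqq : S q q = A w w := by
      rw [hS, hSw, hBop, ← hBt q w, ← hTw, hT]
    have h1 : α * ‖w‖ ^ 2 ≤ S q q := hSqq ▸ hAcoer w
    have h2 : β * ‖q‖ ≤ γ * ‖w‖ := by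
      refine le_trans (hBtlow q) ?_
      rw [← hTw]
      calc ‖T w‖ = ‖(T : X →L[ℝ] X) w‖ := rfl
        _ ≤ ‖(T : X →L[ℝ] X)‖ * ‖w‖ := (T : X →L[ℝ] X).le_opNorm w
        _ ≤ γ * ‖w‖ := by gcongr; exact le_max_left _ _
    exact saddle_aux1 α β γ ‖w‖ ‖q‖ (S q q) hα hβ hγ0 (norm_nonneg _) (norm_nonneg _) h1 h2
  set ES : M ≃L[ℝ] M := coerS.continuousLinearEquivOfBilin with hESdef
  have hES : ∀ q : M, ES q = Sop q := fun q =>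
    (ext_inner_right ℝ fun r => by
      rw [coerS.continuousLinearEquivOfBilin_apply, hS])
  -- constants
  set K1 : ℝ := ‖((ES.symm : M ≃L[ℝ] M) : M →L[ℝ] M)‖ with hK1def
  set K2 : ℝ := ‖Bop‖ + ‖Bt‖ with hK2def
  set K3 : ℝ := ‖((T.symm : X ≃L[ℝ] X) : X →L[ℝ] X)‖ with hK3def
  have hK1 : 0 ≤ K1 := norm_nonneg _
  have hK2 : 0 ≤ K2 := add_nonneg (norm_nonneg _) (norm_nonneg _)
  have hK3 : 0 ≤ K3 := norm_nonneg _
  have hBopK : ∀ x : X, ‖Bop x‖ ≤ K2 * ‖x‖ := fun x =>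
    le_trans (Bop.le_opNorm x) (mul_le_mul_of_nonneg_right
      (le_add_of_nonneg_right (norm_nonneg Bt)) (norm_nonneg x))
  have hBtK : ∀ q : M, ‖Bt q‖ ≤ K2 * ‖q‖ := fun q =>
    le_trans (Bt.le_opNorm q) (mul_le_mul_of_nonneg_right
      (le_add_of_nonneg_left (norm_nonneg Bop)) (norm_nonneg q))
  have hTsK : ∀ x : X, ‖T.symm x‖ ≤ K3 * ‖x‖ := fun x =>
    ((T.symm : X ≃L[ℝ] X) : X →L[ℝ] X).le_opNorm x
  have hESsK : ∀ q : M, ‖ES.symm q‖ ≤ K1 * ‖q‖ := fun q =>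
    ((ES.symm : M ≃L[ℝ] M) : M →L[ℝ] M).le_opNorm q
  refine ⟨K3 * (1 + K2 * (K1 * (K2 * K3 + 1))) + K1 * (K2 * K3 + 1) + 1,
    saddle_aux3 K1 K2 K3 hK1 hK2 hK3, fun φ ψ => ?_⟩
  set f : X := (toDual ℝ X).symm φ with hfdef
  set g : M := (toDual ℝ M).symm ψ with hgdef
  have hf : ∀ v : X, ⟪f, v⟫_ℝ = φ v := fun v => toDual_symm_apply
  have hg : ∀ q : M, ⟪g, q⟫_ℝ = ψ q := fun q => toDual_symm_apply
  have hfn : ‖f‖ = ‖φ‖ := LinearIsometryEquiv.norm_map _ _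
  have hgn : ‖g‖ = ‖ψ‖ := LinearIsometryEquiv.norm_map _ _
  set p : M := ES.symm (Bop (T.symm f) - g) with hpdef
  set u : X := T.symm (f - Bt p) with hudef
  -- (u, p) is a solution
  have hsol : (∀ v : X, A u v + B v p = φ v) ∧ (∀ q : M, B u q = ψ q) := by
    constructor
    · intro v
      have hTu : T u = f - Bt p := T.apply_symm_apply _
      rw [← hT, ← hBt p v, hTu, inner_sub_left, ← hf v]
      ring
    · intro q
      have hBu : Bop u = g := by
        have h1 : Bop u = Bop (T.symm f) - Sop p := by
          rw [hudef, map_sub, map_sub]; rfl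
        have h2 : Sop p = Bop (T.symm f) - g := by
          rw [← hES, hpdef, ES.apply_symm_apply]
        rw [h1, h2]; abel
      rw [← hBop, hBu, hg]
  -- any solution equals (u, p)
  have key : ∀ up : X × M,
      ((∀ v : X, A up.1 v + B v up.2 = φ v) ∧ (∀ q : M, B up.1 q = ψ q)) →
      up = (u, p) := by
    rintro ⟨u', p'⟩ ⟨h1, h2⟩
    simp only at h1 h2
    have e1 : T u' + Bt p' = f := by
      refine ext_inner_right ℝ fun v => ?_
      rw [inner_add_left, hT, hBt, hf, h1 v]
    have e2 : Bop u' = g := by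
      refine ext_inner_right ℝ fun q => ?_
      rw [hBop, hg, h2 q]
    have e3 : u' = T.symm (f - Bt p') := by
      rw [← e1]; simp
    have e4 : ES p' = Bop (T.symm f) - g := by
      rw [hES]
      have : Bop u' = Bop (T.symm f) - Sop p' := by
        rw [e3, map_sub, map_sub]; rfl
      rw [e2] at this
      rw [this]; abel
    have e5 : p' = p := by
      rw [hpdef, ← e4, ES.symm_apply_apply]
    have e6 : u' = u := by rw [e3, e5, hudef]
    simp [e5, e6]
  -- norm bound for (u, p)
  have hpn : ‖p‖ ≤ K1 * (K2 * K3 * ‖φ‖ + ‖ψ‖) := by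
    calc ‖p‖ ≤ K1 * ‖Bop (T.symm f) - g‖ := hESsK _
      _ ≤ K1 * (K2 * K3 * ‖φ‖ + ‖ψ‖) := by
          gcongr
          calc ‖Bop (T.symm f) - g‖ ≤ ‖Bop (T.symm f)‖ + ‖g‖ := norm_sub_le _ _
            _ ≤ K2 * K3 * ‖φ‖ + ‖ψ‖ := by
                rw [hgn]
                gcongr
                calc ‖Bop (T.symm f)‖ ≤ K2 * ‖T.symm f‖ := hBopK _
                  _ ≤ K2 * (K3 * ‖f‖) := by gcongr; exact hTsK f
                  _ = K2 * K3 * ‖φ‖ := by rw [hfn]; ring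
  have hun : ‖u‖ ≤ K3 * (‖φ‖ + K2 * ‖p‖) := by
    calc ‖u‖ ≤ K3 * ‖f - Bt p‖ := hTsK _
      _ ≤ K3 * (‖φ‖ + K2 * ‖p‖) := by
          gcongr
          calc ‖f - Bt p‖ ≤ ‖f‖ + ‖Bt p‖ := norm_sub_le _ _
            _ ≤ ‖φ‖ + K2 * ‖p‖ := by rw [hfn]; gcongr; exact hBtK p
  have hbound : ‖u‖ + ‖p‖ ≤
      (K3 * (1 + K2 * (K1 * (K2 * K3 + 1))) + K1 * (K2 * K3 + 1) + 1) * (‖φ‖ + ‖ψ‖) :=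
    saddle_aux2 K1 K2 K3 ‖u‖ ‖p‖ ‖φ‖ ‖ψ‖ hK1 hK2 hK3 (norm_nonneg _) (norm_nonneg _)
      (norm_nonneg _) hpn hun
  refine ⟨⟨(u, p), hsol, fun up h => key up h⟩, fun up h => ?_⟩
  rw [key up h]
  exact hbound
end

section
/- Let V, Q and W be finite-dimensional real normed vector spaces, and let a : V × V → ℝ, b : V × Q → ℝ and c : V × W → ℝ be bilinear forms. Assume a is coercive with constant α > 0, i.e. a(v,v) ≥ α ‖v‖_V² for all v ∈ V. Define V₀ = {v ∈ V : c(v,μ) = 0 for all μ ∈ W}. Assume (H1'): if q ∈ Q satisfies b(v,q) = 0 for all v ∈ V₀, then q = 0; and (H2): if μ ∈ W satisfies c(v,μ) = 0 for all v ∈ V, then μ = 0. Then for every linear functional ℓ : V → ℝ and every linear functional g : W → ℝ, there exists a unique triple (u,p,λ) ∈ V × Q × W such that a(u,v) + b(v,p) + c(v,λ) = ℓ(v) for all v ∈ V, b(u,q) = 0 for all q ∈ Q, and c(u,μ) = g(μ) for all μ ∈ W. -/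
/-- **Unique solvability of the unstabilized discrete problem.**
`V`, `Q`, `W` finite-dimensional real normed spaces, `a`, `b`, `c` bilinear
forms, `a` coercive with constant `α > 0`, hypothesis (H1'): `b(·,q)` vanishing
on `V₀ = {v : c(v,μ) = 0 ∀ μ}` forces `q = 0`, and (H2): `c(·,μ)` vanishing on
`V` forces `μ = 0`. Then for all linear functionals `ℓ`, `g` there is a unique
triple `(u,p,λ)` solving the discrete mixed problem. -/
theorem stmt_1
    (V Q W : Type*)
    [NormedAddCommGroup V] [NormedSpace ℝ V] [FiniteDimensional ℝ V]
    [NormedAddCommGroup Q] [NormedSpace ℝ Q] [FiniteDimensional ℝ Q]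
    [NormedAddCommGroup W] [NormedSpace ℝ W] [FiniteDimensional ℝ W]
    (a : V →ₗ[ℝ] V →ₗ[ℝ] ℝ) (b : V →ₗ[ℝ] Q →ₗ[ℝ] ℝ) (c : V →ₗ[ℝ] W →ₗ[ℝ] ℝ)
    (α : ℝ) (hα : 0 < α)
    (hcoer : ∀ v : V, α * ‖v‖ ^ 2 ≤ a v v)
    (hH1' : ∀ q : Q, (∀ v : V, (∀ μ : W, c v μ = 0) → b v q = 0) → q = 0)
    (hH2 : ∀ μ : W, (∀ v : V, c v μ = 0) → μ = 0)
    (ℓ : V →ₗ[ℝ] ℝ) (g : W →ₗ[ℝ] ℝ) :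
    ∃! upl : V × Q × W,
      (∀ v : V, a upl.1 v + b v upl.2.1 + c v upl.2.2 = ℓ v) ∧
      (∀ q : Q, b upl.1 q = 0) ∧
      (∀ μ : W, c upl.1 μ = g μ) := by
  -- homogeneous system has only the zero solution
  have key : ∀ (u : V) (p : Q) (l : W),
      (∀ v : V, a u v + b v p + c v l = 0) → (∀ q : Q, b u q = 0) →
      (∀ μ : W, c u μ = 0) → u = 0 ∧ p = 0 ∧ l = 0 := by
    intro u p l h1 h2 h3
    have hauu : a u u = 0 := by
      have := h1 u
      rw [h2 p, h3 l] at this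
      linarith
    have hu : u = 0 := by
      have h := hcoer u
      rw [hauu] at h
      have : ‖u‖ ^ 2 ≤ 0 := by nlinarith
      have : ‖u‖ = 0 := by nlinarith [sq_nonneg ‖u‖, norm_nonneg u]
      simpa using this
    subst hu
    have h1' : ∀ v : V, b v p + c v l = 0 := by
      intro v
      have := h1 v
      simpa using this
    have hp : p = 0 := by
      apply hH1' p
      intro v hv
      have := h1' v
      rw [hv l] at this
      linarith
    subst hp
    refine ⟨rfl, rfl, ?_⟩
    apply hH2 l
    intro v
    have := h1' v
    simpa using this
  -- the global linear map
  set T : (V × Q × W) →ₗ[ℝ] (Module.Dual ℝ V × Module.Dual ℝ Q × Module.Dual ℝ W) :=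
    LinearMap.prod
      ((a ∘ₗ LinearMap.fst ℝ V (Q × W)) +
       (b.flip ∘ₗ (LinearMap.fst ℝ Q W ∘ₗ LinearMap.snd ℝ V (Q × W))) +
       (c.flip ∘ₗ (LinearMap.snd ℝ Q W ∘ₗ LinearMap.snd ℝ V (Q × W))))
      (LinearMap.prod
        (b ∘ₗ LinearMap.fst ℝ V (Q × W))
        (c ∘ₗ LinearMap.fst ℝ V (Q × W))) with hT
  have hTapp : ∀ x : V × Q × W, T x =
      (a x.1 + b.flip x.2.1 + c.flip x.2.2, b x.1, c x.1) := by
    intro x; rfl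
  have hinj : Function.Injective T := by
    rw [injective_iff_map_eq_zero]
    intro x hx
    rw [hTapp, Prod.ext_iff, Prod.ext_iff] at hx
    obtain ⟨hx1, hx2, hx3⟩ := hx
    obtain ⟨hu, hp, hl⟩ := key x.1 x.2.1 x.2.2
      (fun v => by
        have := congrFun (congrArg DFunLike.coe hx1) v
        simpa using this)
      (fun q => by have := congrFun (congrArg DFunLike.coe hx2) q; simpa using this)
      (fun μ => by have := congrFun (congrArg DFunLike.coe hx3) μ; simpa using this)
    exact Prod.ext hu (Prod.ext hp hl)
  have hrank : Module.finrank ℝ (V × Q × W) =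
      Module.finrank ℝ (Module.Dual ℝ V × Module.Dual ℝ Q × Module.Dual ℝ W) := by
    simp [Module.finrank_prod, Subspace.dual_finrank_eq]
  have hsurj : Function.Surjective T :=
    (LinearMap.injective_iff_surjective_of_finrank_eq_finrank hrank).mp hinj
  obtain ⟨x, hx⟩ := hsurj (ℓ, 0, g)
  rw [hTapp, Prod.ext_iff, Prod.ext_iff] at hx
  obtain ⟨hx1, hx2, hx3⟩ := hx
  refine ⟨x, ⟨?_, ?_, ?_⟩, ?_⟩
  · intro v
    have := congrFun (congrArg DFunLike.coe hx1) v
    simpa using this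
  · intro q
    have := congrFun (congrArg DFunLike.coe hx2) q
    simpa using this
  · intro μ
    have := congrFun (congrArg DFunLike.coe hx3) μ
    simpa using this
  · rintro ⟨u', p', l'⟩ ⟨h1, h2, h3⟩
    -- difference solves homogeneous system
    obtain ⟨hu, hp, hl⟩ := key (u' - x.1) (p' - x.2.1) (l' - x.2.2)
      (fun v => by
        have e1 := h1 v
        have e2 : a x.1 v + b v x.2.1 + c v x.2.2 = ℓ v := by
          have := congrFun (congrArg DFunLike.coe hx1) v
          simpa using this
        simp only [map_sub, LinearMap.sub_apply]
        linarith)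
      (fun q => by
        have e2 : b x.1 q = 0 := by
          have := congrFun (congrArg DFunLike.coe hx2) q
          simpa using this
        simp only [map_sub, LinearMap.sub_apply]
        rw [h2 q, e2]; ring)
      (fun μ => by
        have e2 : c x.1 μ = g μ := by
          have := congrFun (congrArg DFunLike.coe hx3) μ
          simpa using this
        simp only [map_sub, LinearMap.sub_apply]
        rw [h3 μ, e2]; ring)
    have : u' = x.1 := sub_eq_zero.mp hu
    have : p' = x.2.1 := sub_eq_zero.mp hp
    have : l' = x.2.2 := sub_eq_zero.mp hl
    exact Prod.ext (sub_eq_zero.mp hu) (Prod.ext (sub_eq_zero.mp hp) (sub_eq_zero.mp hl))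
end

section
/- Let V, Q and W be real Hilbert spaces, and let a : V × V → ℝ, b : V × Q → ℝ and c : V × W → ℝ be bounded bilinear forms with |a(u,v)| ≤ C_a ‖u‖_V ‖v‖_V, |b(v,q)| ≤ C_b ‖v‖_V ‖q‖_Q and |c(v,μ)| ≤ C_c ‖v‖_V ‖μ‖_W. Assume a is coercive with constant α > 0, i.e. a(v,v) ≥ α ‖v‖_V² for all v ∈ V. Fix continuous linear functionals L ∈ V' and G ∈ W', and let (u,p,λ) ∈ V × Q × W satisfy: a(u,v) + b(v,p) + c(v,λ) = L(v) for all v ∈ V, b(u,q) = 0 for all q ∈ Q, and c(u,μ) = G(μ) for all μ ∈ W. Let V^h ⊆ V, Q^h ⊆ Q, W^h ⊆ W be closed subspaces; define V^h₀ = {v ∈ V^h : c(v,μ) = 0 for all μ ∈ W^h} and V^h_g = {v ∈ V^h : c(v,μ) = G(μ) for all μ ∈ W^h}. Assume the discrete inf-sup condition: there is β > 0 such that for every q ∈ Q^h, sup_{0 ≠ v ∈ V^h₀} b(v,q)/‖v‖_V ≥ β ‖q‖_Q. Let (u^h,p^h,λ^h) ∈ V^h × Q^h × W^h satisfy the same three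 equations with test functions taken in V^h, Q^h and W^h respectively (with the same L and G). Then there is a constant C > 0, depending only on α, β, C_a, C_b and C_c (in particular independent of the subspaces), such that ‖u − u^h‖_V + ‖p − p^h‖_Q ≤ C ( inf_{v ∈ V^h_g} ‖u − v‖_V + inf_{q ∈ Q^h} ‖p − q‖_Q + inf_{μ ∈ W^h} ‖λ − μ‖_W ). -/
set_option maxHeartbeats 1000000 in
/-- **Abstract a priori error estimate for the unstabilized method.**
Under boundedness of `a`, `b`, `c`, coercivity of `a` and the discrete
inf-sup condition on `V^h₀ × Q^h`, the Galerkin error for velocity and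
pressure is bounded by best-approximation errors, with a constant depending
only on `α`, `β`, `C_a`, `C_b`, `C_c` (independent of the subspaces). -/
theorem stmt_2
    (V Q W : Type*)
    [NormedAddCommGroup V] [InnerProductSpace ℝ V] [CompleteSpace V]
    [NormedAddCommGroup Q] [InnerProductSpace ℝ Q] [CompleteSpace Q]
    [NormedAddCommGroup W] [InnerProductSpace ℝ W] [CompleteSpace W]
    (a : V →ₗ[ℝ] V →ₗ[ℝ] ℝ) (b : V →ₗ[ℝ] Q →ₗ[ℝ] ℝ) (c : V →ₗ[ℝ] W →ₗ[ℝ] ℝ)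
    (C_a C_b C_c α β : ℝ) (hα : 0 < α) (hβ : 0 < β)
    (ha_bdd : ∀ u v : V, |a u v| ≤ C_a * ‖u‖ * ‖v‖)
    (hb_bdd : ∀ (v : V) (q : Q), |b v q| ≤ C_b * ‖v‖ * ‖q‖)
    (hc_bdd : ∀ (v : V) (μ : W), |c v μ| ≤ C_c * ‖v‖ * ‖μ‖)
    (hcoer : ∀ v : V, α * ‖v‖ ^ 2 ≤ a v v)
    (L : V →L[ℝ] ℝ) (G : W →L[ℝ] ℝ)
    (u : V) (p : Q) (lam : W)
    (hu1 : ∀ v : V, a u v + b v p + c v lam = L v)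
    (hu2 : ∀ q : Q, b u q = 0)
    (hu3 : ∀ μ : W, c u μ = G μ) :
    ∃ C : ℝ, 0 < C ∧
      ∀ (Vh : Submodule ℝ V) (Qh : Submodule ℝ Q) (Wh : Submodule ℝ W),
        IsClosed (Vh : Set V) → IsClosed (Qh : Set Q) → IsClosed (Wh : Set W) →
        -- discrete inf-sup condition on V^h₀ × Q^h with constant β
        (∀ q ∈ Qh, β * ‖q‖ ≤
          ⨆ v : {v : V // (v ∈ Vh ∧ ∀ μ ∈ Wh, c v μ = 0) ∧ v ≠ 0},
            b v.1 q / ‖v.1‖) →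
        ∀ (uh : V) (ph : Q) (lh : W),
          uh ∈ Vh → ph ∈ Qh → lh ∈ Wh →
          (∀ v ∈ Vh, a uh v + b v ph + c v lh = L v) →
          (∀ q ∈ Qh, b uh q = 0) →
          (∀ μ ∈ Wh, c uh μ = G μ) →
          ‖u - uh‖ + ‖p - ph‖ ≤ C *
            ((⨅ v : {v : V // v ∈ Vh ∧ ∀ μ ∈ Wh, c v μ = G μ}, ‖u - v.1‖) +
             (⨅ q : Qh, ‖p - (q : Q)‖) +
             (⨅ μ : Wh, ‖lam - (μ : W)‖)) := by
  obtain ⟨Ca, hCa_def⟩ : ∃ x : ℝ, x = max C_a 0 := ⟨_, rfl⟩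
  obtain ⟨Cb, hCb_def⟩ : ∃ x : ℝ, x = max C_b 0 := ⟨_, rfl⟩
  obtain ⟨Cc, hCc_def⟩ : ∃ x : ℝ, x = max C_c 0 := ⟨_, rfl⟩
  have hCa0 : 0 ≤ Ca := by rw [hCa_def]; exact le_max_right _ _
  have hCb0 : 0 ≤ Cb := by rw [hCb_def]; exact le_max_right _ _
  have hCc0 : 0 ≤ Cc := by rw [hCc_def]; exact le_max_right _ _
  have ha' : ∀ x y : V, a x y ≤ Ca * ‖x‖ * ‖y‖ := by
    intro x y
    refine le_trans (le_abs_self _) (le_trans (ha_bdd x y) ?_)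
    rw [hCa_def]
    have := mul_nonneg (norm_nonneg x) (norm_nonneg y)
    nlinarith [le_max_left C_a (0:ℝ)]
  have hb' : ∀ (x : V) (y : Q), b x y ≤ Cb * ‖x‖ * ‖y‖ := by
    intro x y
    refine le_trans (le_abs_self _) (le_trans (hb_bdd x y) ?_)
    rw [hCb_def]
    have := mul_nonneg (norm_nonneg x) (norm_nonneg y)
    nlinarith [le_max_left C_b (0:ℝ)]
  have hc' : ∀ (x : V) (y : W), c x y ≤ Cc * ‖x‖ * ‖y‖ := by
    intro x y
    refine le_trans (le_abs_self _) (le_trans (hc_bdd x y) ?_)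
    rw [hCc_def]
    have := mul_nonneg (norm_nonneg x) (norm_nonneg y)
    nlinarith [le_max_left C_c (0:ℝ)]
  obtain ⟨K, hK_def⟩ : ∃ x : ℝ,
      x = (Ca + Cb + Cc + Cb * Ca / β) / α + (Cb * (Ca + Cb + Cc) / β) / α + 1 := ⟨_, rfl⟩
  have hA0 : 0 ≤ Ca + Cb + Cc + Cb * Ca / β := by
    have : 0 ≤ Cb * Ca / β := div_nonneg (mul_nonneg hCb0 hCa0) hβ.le
    linarith
  have hB0 : 0 ≤ Cb * (Ca + Cb + Cc) / β :=
    div_nonneg (mul_nonneg hCb0 (by linarith)) hβ.le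
  have hK1 : 1 ≤ K := by
    rw [hK_def]
    have h1 : 0 ≤ (Ca + Cb + Cc + Cb * Ca / β) / α := div_nonneg hA0 hα.le
    have h2 : 0 ≤ (Cb * (Ca + Cb + Cc) / β) / α := div_nonneg hB0 hα.le
    linarith
  have hKA : Ca + Cb + Cc + Cb * Ca / β ≤ K * α := by
    rw [hK_def]
    have h3 : (Ca + Cb + Cc + Cb * Ca / β) / α * α = Ca + Cb + Cc + Cb * Ca / β :=
      div_mul_cancel₀ _ hα.ne'
    have h4 : (Cb * (Ca + Cb + Cc) / β) / α * α = Cb * (Ca + Cb + Cc) / β :=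
      div_mul_cancel₀ _ hα.ne'
    have expand : ((Ca + Cb + Cc + Cb * Ca / β) / α + (Cb * (Ca + Cb + Cc) / β) / α + 1) * α
        = (Ca + Cb + Cc + Cb * Ca / β) / α * α + (Cb * (Ca + Cb + Cc) / β) / α * α + α := by
      ring
    rw [expand, h3, h4]
    linarith
  have hKB : Cb * (Ca + Cb + Cc) / β ≤ K * α := by
    rw [hK_def]
    have h3 : (Ca + Cb + Cc + Cb * Ca / β) / α * α = Ca + Cb + Cc + Cb * Ca / β :=
      div_mul_cancel₀ _ hα.ne'
    have h4 : (Cb * (Ca + Cb + Cc) / β) / α * α = Cb * (Ca + Cb + Cc) / β :=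
      div_mul_cancel₀ _ hα.ne'
    have expand : ((Ca + Cb + Cc + Cb * Ca / β) / α + (Cb * (Ca + Cb + Cc) / β) / α + 1) * α
        = (Ca + Cb + Cc + Cb * Ca / β) / α * α + (Cb * (Ca + Cb + Cc) / β) / α * α + α := by
      ring
    rw [expand, h3, h4]
    linarith
  have hK0 : (0:ℝ) ≤ K := le_trans zero_le_one hK1
  obtain ⟨C, hC_def⟩ : ∃ x : ℝ,
      x = (1 + 2 * K) + 1 + (Ca * (1 + 2 * K) + Cb + Cc) / β := ⟨_, rfl⟩
  have hCfrac0 : 0 ≤ (Ca * (1 + 2 * K) + Cb + Cc) / β := by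
    refine div_nonneg ?_ hβ.le
    have : 0 ≤ Ca * (1 + 2 * K) := mul_nonneg hCa0 (by linarith)
    linarith
  have hC1 : (1:ℝ) ≤ C := by rw [hC_def]; linarith
  have hCpos : 0 < C := lt_of_lt_of_le one_pos hC1
  refine ⟨C, hCpos, ?_⟩
  intro Vh Qh Wh _ _ _ hinfsup uh ph lh huhV hphQ hlhW huh1 huh2 huh3
  haveI hne1 : Nonempty {v : V // v ∈ Vh ∧ ∀ μ ∈ Wh, c v μ = G μ} := ⟨⟨uh, huhV, huh3⟩⟩
  haveI hne2 : Nonempty Qh := ⟨⟨ph, hphQ⟩⟩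
  haveI hne3 : Nonempty Wh := ⟨⟨lh, hlhW⟩⟩
  have hG : ∀ x ∈ Vh, a (u - uh) x + b x (p - ph) + c x (lam - lh) = 0 := by
    intro x hx
    have h1 := hu1 x
    have h2 := huh1 x hx
    simp only [map_sub, LinearMap.sub_apply]
    linarith
  apply le_of_forall_pos_le_add
  intro ε hε
  obtain ⟨Iu, hIu⟩ : ∃ x : ℝ,
      x = ⨅ v : {v : V // v ∈ Vh ∧ ∀ μ ∈ Wh, c v μ = G μ}, ‖u - v.1‖ := ⟨_, rfl⟩
  obtain ⟨Ip, hIp⟩ : ∃ x : ℝ, x = ⨅ q : Qh, ‖p - (q : Q)‖ := ⟨_, rfl⟩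
  obtain ⟨Il, hIl⟩ : ∃ x : ℝ, x = ⨅ μ : Wh, ‖lam - (μ : W)‖ := ⟨_, rfl⟩
  rw [← hIu, ← hIp, ← hIl]
  obtain ⟨δ, hδ_def⟩ : ∃ x : ℝ, x = ε / (3 * C) := ⟨_, rfl⟩
  have hδ0 : 0 < δ := by rw [hδ_def]; positivity
  obtain ⟨⟨v, hvV, hvc⟩, hv⟩ :
      ∃ i : {v : V // v ∈ Vh ∧ ∀ μ ∈ Wh, c v μ = G μ}, ‖u - i.1‖ < Iu + δ := by
    rw [hIu]; exact exists_lt_of_ciInf_lt (lt_add_of_pos_right _ hδ0)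
  obtain ⟨⟨q, hqQ⟩, hq⟩ : ∃ i : Qh, ‖p - (i : Q)‖ < Ip + δ := by
    rw [hIp]; exact exists_lt_of_ciInf_lt (lt_add_of_pos_right _ hδ0)
  obtain ⟨⟨m, hmW⟩, hm⟩ : ∃ i : Wh, ‖lam - (i : W)‖ < Il + δ := by
    rw [hIl]; exact exists_lt_of_ciInf_lt (lt_add_of_pos_right _ hδ0)
  simp only at hv hq hm
  obtain ⟨w, hw_def⟩ : ∃ x : V, x = uh - v := ⟨_, rfl⟩
  have hwV : w ∈ Vh := by rw [hw_def]; exact Vh.sub_mem huhV hvV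
  have hw0 : ∀ ν ∈ Wh, c w ν = 0 := by
    intro ν hν
    rw [hw_def]
    simp only [map_sub, LinearMap.sub_apply]
    rw [huh3 ν hν, hvc ν hν, sub_self]
  obtain ⟨E, hE_def⟩ : ∃ x : ℝ, x = ‖u - v‖ + ‖p - q‖ + ‖lam - m‖ := ⟨_, rfl⟩
  have hdu0 : 0 ≤ ‖u - v‖ := norm_nonneg _
  have hdp0 : 0 ≤ ‖p - q‖ := norm_nonneg _
  have hdl0 : 0 ≤ ‖lam - m‖ := norm_nonneg _
  have hnw : 0 ≤ ‖w‖ := norm_nonneg _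
  have hE0 : 0 ≤ E := by rw [hE_def]; linarith
  have hduE : ‖u - v‖ ≤ E := by rw [hE_def]; linarith
  have hdpE : ‖p - q‖ ≤ E := by rw [hE_def]; linarith
  have hdlE : ‖lam - m‖ ≤ E := by rw [hE_def]; linarith
  have huuh : ‖u - uh‖ ≤ ‖u - v‖ + ‖w‖ := by
    have h : u - uh = (u - v) - w := by rw [hw_def]; abel
    rw [h]; exact norm_sub_le _ _
  -- pressure bound
  have hP : β * ‖ph - q‖ ≤ Ca * ‖u - uh‖ + Cc * ‖lam - m‖ + Cb * ‖p - q‖ := by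
    refine le_trans (hinfsup (ph - q) (Qh.sub_mem hphQ hqQ)) ?_
    have hM0 : 0 ≤ Ca * ‖u - uh‖ + Cc * ‖lam - m‖ + Cb * ‖p - q‖ := by
      have h1 := mul_nonneg hCa0 (norm_nonneg (u - uh))
      have h2 := mul_nonneg hCc0 hdl0
      have h3 := mul_nonneg hCb0 hdp0
      linarith
    refine Real.iSup_le ?_ hM0
    rintro ⟨x, ⟨hxV, hx0⟩, hxne⟩
    have hxpos : (0:ℝ) < ‖x‖ := norm_pos_iff.mpr hxne
    rw [div_le_iff₀ hxpos]
    have hGx := hG x hxV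
    have hclh : c x (lam - lh) = c x (lam - m) := by
      simp only [map_sub]
      rw [hx0 lh hlhW, hx0 m hmW]
    have hsplit : (b x) (ph - q) = a (u - uh) x + c x (lam - m) + b x (p - q) := by
      have e1 : (b x) (ph - q) = -((b x) (p - ph)) + (b x) (p - q) := by
        simp only [map_sub]; ring
      rw [e1, ← hclh]; linarith
    have e2 := ha' (u - uh) x
    have e3 := hc' x (lam - m)
    have e4 := hb' x (p - q)
    rw [hsplit]
    have expand : (Ca * ‖u - uh‖ + Cc * ‖lam - m‖ + Cb * ‖p - q‖) * ‖x‖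
        = Ca * ‖u - uh‖ * ‖x‖ + Cc * ‖x‖ * ‖lam - m‖ + Cb * ‖x‖ * ‖p - q‖ := by ring
    rw [expand]
    exact add_le_add (add_le_add e2 e3) e4
  -- velocity quadratic bound
  have hvel : α * ‖w‖ ^ 2 ≤
      Ca * ‖u - v‖ * ‖w‖ + Cb * ‖p - q‖ * ‖w‖ + Cc * ‖lam - m‖ * ‖w‖
        + Cb * ‖u - v‖ * ‖q - ph‖ := by
    have h0 := hcoer w
    have hGw := hG w hwV
    have hclh : c w (lam - lh) = c w (lam - m) := by
      simp only [map_sub]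
      rw [hw0 lh hlhW, hw0 m hmW]
    have hbqp : b w (q - ph) = b (u - v) (q - ph) := by
      have e1 : b w (q - ph) = b uh (q - ph) - b v (q - ph) := by
        rw [hw_def]; simp only [map_sub, LinearMap.sub_apply]; ring
      have e2 : b (u - v) (q - ph) = b u (q - ph) - b v (q - ph) := by
        simp only [map_sub, LinearMap.sub_apply]; ring
      rw [e1, e2, huh2 (q - ph) (Qh.sub_mem hqQ hphQ), hu2 (q - ph)]
    have hde : a w w = a (u - v) w - a (u - uh) w := by
      have h : (u - v) - (u - uh) = w := by rw [hw_def]; abel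
      rw [← h]
      simp only [map_sub, LinearMap.sub_apply]
      ring
    have hbw : b w (p - ph) = b w (p - q) + b (u - v) (q - ph) := by
      rw [← hbqp]
      simp only [map_sub]; ring
    have key : a w w = a (u - v) w + b w (p - q) + b (u - v) (q - ph) + c w (lam - m) := by
      have h : a (u - uh) w = -(b w (p - ph)) - c w (lam - lh) := by linarith
      rw [hde, h, hclh, hbw]; ring
    have e1 := ha' (u - v) w
    have e2 := hb' w (p - q)
    have e3 := hb' (u - v) (q - ph)
    have e4 := hc' w (lam - m)
    have c1 : Cb * ‖w‖ * ‖p - q‖ = Cb * ‖p - q‖ * ‖w‖ := by ring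
    have c2 : Cc * ‖w‖ * ‖lam - m‖ = Cc * ‖lam - m‖ * ‖w‖ := by ring
    have c3 : Ca * ‖u - v‖ * ‖w‖ = Ca * ‖u - v‖ * ‖w‖ := rfl
    linarith [h0, key.le, key.ge, e1, e2, e3, e4, c1, c2]
  have hqph : β * ‖q - ph‖ ≤ Ca * E + Ca * ‖w‖ + Cc * E + Cb * E := by
    rw [norm_sub_rev]
    have t1 : Ca * ‖u - uh‖ ≤ Ca * ‖u - v‖ + Ca * ‖w‖ := by
      have h := mul_le_mul_of_nonneg_left huuh hCa0
      have h2 : Ca * (‖u - v‖ + ‖w‖) = Ca * ‖u - v‖ + Ca * ‖w‖ := by ring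
      linarith
    linarith [hP, t1, mul_le_mul_of_nonneg_left hduE hCa0,
      mul_le_mul_of_nonneg_left hdlE hCc0, mul_le_mul_of_nonneg_left hdpE hCb0]
  have hquad : ‖w‖ ^ 2 ≤ K * E * ‖w‖ + K * E ^ 2 := by
    have hnqp : 0 ≤ ‖q - ph‖ := norm_nonneg _
    have step1 : α * ‖w‖ ^ 2 ≤ (Ca + Cb + Cc) * E * ‖w‖ + Cb * E * ‖q - ph‖ := by
      have t1 : Ca * ‖u - v‖ * ‖w‖ ≤ Ca * E * ‖w‖ :=
        mul_le_mul_of_nonneg_right (mul_le_mul_of_nonneg_left hduE hCa0) hnw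
      have t2 : Cb * ‖p - q‖ * ‖w‖ ≤ Cb * E * ‖w‖ :=
        mul_le_mul_of_nonneg_right (mul_le_mul_of_nonneg_left hdpE hCb0) hnw
      have t3 : Cc * ‖lam - m‖ * ‖w‖ ≤ Cc * E * ‖w‖ :=
        mul_le_mul_of_nonneg_right (mul_le_mul_of_nonneg_left hdlE hCc0) hnw
      have t4 : Cb * ‖u - v‖ * ‖q - ph‖ ≤ Cb * E * ‖q - ph‖ :=
        mul_le_mul_of_nonneg_right (mul_le_mul_of_nonneg_left hduE hCb0) hnqp
      have expand : (Ca + Cb + Cc) * E * ‖w‖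
          = Ca * E * ‖w‖ + Cb * E * ‖w‖ + Cc * E * ‖w‖ := by ring
      linarith [hvel, t1, t2, t3, t4]
    have h1 : ‖q - ph‖ ≤ (Ca * E + Ca * ‖w‖ + Cc * E + Cb * E) / β := by
      rw [le_div_iff₀ hβ]; linarith [hqph]
    have h2 : Cb * E * ‖q - ph‖ ≤ Cb * E * ((Ca * E + Ca * ‖w‖ + Cc * E + Cb * E) / β) :=
      mul_le_mul_of_nonneg_left h1 (mul_nonneg hCb0 hE0)
    have h3 : Cb * E * ((Ca * E + Ca * ‖w‖ + Cc * E + Cb * E) / β)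
        = (Cb * (Ca + Cb + Cc) / β) * E ^ 2 + (Cb * Ca / β) * E * ‖w‖ := by
      field_simp; ring
    have step3 : α * ‖w‖ ^ 2 ≤ (K * α) * E * ‖w‖ + (K * α) * E ^ 2 := by
      have t1 : (Ca + Cb + Cc) * E * ‖w‖ + (Cb * Ca / β) * E * ‖w‖ ≤ (K * α) * E * ‖w‖ := by
        have h := mul_le_mul_of_nonneg_right hKA (mul_nonneg hE0 hnw)
        have e1 : (Ca + Cb + Cc + Cb * Ca / β) * (E * ‖w‖)
            = (Ca + Cb + Cc) * E * ‖w‖ + (Cb * Ca / β) * E * ‖w‖ := by ring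
        have e2 : K * α * (E * ‖w‖) = (K * α) * E * ‖w‖ := by ring
        linarith
      have t2 : (Cb * (Ca + Cb + Cc) / β) * E ^ 2 ≤ (K * α) * E ^ 2 :=
        mul_le_mul_of_nonneg_right hKB (sq_nonneg E)
      rw [h3] at h2
      linarith [step1, h2]
    have hmul : α * ‖w‖ ^ 2 ≤ α * (K * E * ‖w‖ + K * E ^ 2) := by
      have e1 : α * (K * E * ‖w‖ + K * E ^ 2) = (K * α) * E * ‖w‖ + (K * α) * E ^ 2 := by
        ring
      linarith [step3]
    exact le_of_mul_le_mul_left hmul hα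
  have hwE : ‖w‖ ≤ 2 * K * E := by
    by_cases hcase : ‖w‖ ≤ 2 * K * E
    · exact hcase
    push_neg at hcase
    exfalso
    have hKE0 : 0 ≤ K * E := mul_nonneg hK0 hE0
    have hwpos : 0 < ‖w‖ := lt_of_le_of_lt (by linarith) hcase
    have hEw : E ≤ ‖w‖ := by nlinarith
    have h1 : K * E ^ 2 ≤ K * E * ‖w‖ := by
      have := mul_le_mul_of_nonneg_left hEw hKE0
      have e : K * E * E = K * E ^ 2 := by ring
      linarith
    have h2 : (2 * K * E) * ‖w‖ < ‖w‖ * ‖w‖ := mul_lt_mul_of_pos_right hcase hwpos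
    have e2 : ‖w‖ * ‖w‖ = ‖w‖ ^ 2 := by ring
    have e3 : (2 * K * E) * ‖w‖ = 2 * (K * E * ‖w‖) := by ring
    linarith [hquad]
  have hu_err : ‖u - uh‖ ≤ (1 + 2 * K) * E := by
    have e : (1 + 2 * K) * E = E + 2 * K * E := by ring
    linarith [huuh, hwE, hduE]
  have hp_err : ‖p - ph‖ ≤ E + ((Ca * (1 + 2 * K) + Cb + Cc) / β) * E := by
    have h1 : ‖p - ph‖ ≤ ‖p - q‖ + ‖ph - q‖ := by
      have h : p - ph = (p - q) - (ph - q) := by abel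
      rw [h]; exact norm_sub_le _ _
    have h2 : β * ‖ph - q‖ ≤ Ca * (1 + 2 * K) * E + Cc * E + Cb * E := by
      have t1 := mul_le_mul_of_nonneg_left hu_err hCa0
      have e1 : Ca * ((1 + 2 * K) * E) = Ca * (1 + 2 * K) * E := by ring
      linarith [hP, mul_le_mul_of_nonneg_left hdlE hCc0,
        mul_le_mul_of_nonneg_left hdpE hCb0]
    have h3 : ‖ph - q‖ ≤ (Ca * (1 + 2 * K) * E + Cc * E + Cb * E) / β := by
      rw [le_div_iff₀ hβ]; linarith [h2]
    have h4 : (Ca * (1 + 2 * K) * E + Cc * E + Cb * E) / β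
        = ((Ca * (1 + 2 * K) + Cb + Cc) / β) * E := by ring
    rw [h4] at h3
    linarith
  have hsum : ‖u - uh‖ + ‖p - ph‖ ≤ C * E := by
    rw [hC_def]
    have e : (1 + 2 * K + 1 + (Ca * (1 + 2 * K) + Cb + Cc) / β) * E
        = (1 + 2 * K) * E + (E + ((Ca * (1 + 2 * K) + Cb + Cc) / β) * E) := by ring
    linarith [hu_err, hp_err]
  have hEδ : E ≤ (Iu + Ip + Il) + 3 * δ := by
    rw [hE_def]
    linarith [hv, hq, hm]
  have hfin : C * E ≤ C * (Iu + Ip + Il) + ε := by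
    have h1 := mul_le_mul_of_nonneg_left hEδ hCpos.le
    have h2 : C * (3 * δ) = ε := by
      rw [hδ_def]
      field_simp
    have e : C * ((Iu + Ip + Il) + 3 * δ) = C * (Iu + Ip + Il) + C * (3 * δ) := by ring
    linarith [h1]
  linarith [hsum, hfin]
end
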